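/- Let G and H be finite simple graphs containing no isolated vertices. Then γ_t(G)·γ(H) ≤ 2·γ(G □ H). -/

import Mathlib

open SimpleGraph

/-- `D` is a dominating set of `G`: every vertex not in `D` has a neighbor in `D`. -/
def IsDomSet {V : Type*} (G : SimpleGraph V) (D : Finset V) : Prop :=
  ∀ v : V, v ∉ D → ∃ u ∈ D, G.Adj u v

/-- `D` is a total dominating set of `G`: every vertex has a neighbor in `D`. -/
def IsTotalDomSet {V : Type*} (G : SimpleGraph V) (D : Finset V) : Prop :=
  ∀ v : V, ∃ u ∈ D, G.Adj u v

/-- The domination number `γ(G)`. -/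
noncomputable def domNum {V : Type*} [Fintype V] (G : SimpleGraph V) : ℕ :=
  sInf {k : ℕ | ∃ D : Finset V, IsDomSet G D ∧ D.card = k}

/-- The total domination number `γ_t(G)`. -/
noncomputable def totalDomNum {V : Type*} [Fintype V] (G : SimpleGraph V) : ℕ :=
  sInf {k : ℕ | ∃ D : Finset V, IsTotalDomSet G D ∧ D.card = k}

/-!
Fix a minimum total dominating set `U` of `G` and send every vertex `v` to a neighbour `b v ∈ U`;
the fibres of `b` cut `V` into cells, one per `u ∈ U`. Let `D` be any dominating set of
`G □ H`. For each `u`, a vertex `w` of `H` that is undominated within the slab `b⁻¹ u × W` must be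
dominated vertically, so the `H`-coordinates of `D` over the slab, together with the columns `w`
whose row `{v | (v, w) ∈ D}` totally dominates the cell, dominate `H`. On the other hand the row at
`w` can totally dominate at most as many cells as it has vertices: otherwise it could replace
their centres in `U`, producing a smaller total dominating set. Summing over `u` and double counting
the pairs (cell, column) gives `|U| γ(H) ≤ |D| + |D|`.
-/

open Finset

section DominationNumbers

variable {V : Type*} [Fintype V] {G : SimpleGraph V}

theorem IsDomSet.domNum_le {D : Finset V} (hD : IsDomSet G D) : domNum G ≤ #D :=
  Nat.sInf_le ⟨D, hD, rfl⟩

theorem IsTotalDomSet.totalDomNum_le {D : Finset V} (hD : IsTotalDomSet G D) :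
    totalDomNum G ≤ #D :=
  Nat.sInf_le ⟨D, hD, rfl⟩

theorem exists_isDomSet_card_eq_domNum (G : SimpleGraph V) :
    ∃ D, IsDomSet G D ∧ #D = domNum G :=
  Nat.sInf_mem (s := {k | ∃ D, IsDomSet G D ∧ #D = k})
    ⟨_, univ, fun v hv => absurd (mem_univ v) hv, rfl⟩

theorem exists_isTotalDomSet_card_eq_totalDomNum (h : ∃ D, IsTotalDomSet G D) :
    ∃ D, IsTotalDomSet G D ∧ #D = totalDomNum G :=
  Nat.sInf_mem (s := {k | ∃ D, IsTotalDomSet G D ∧ #D = k})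
    (by obtain ⟨D, hD⟩ := h; exact ⟨_, D, hD, rfl⟩)

theorem totalDomNum_eq_zero_of_forall_not_isTotalDomSet (h : ∀ D, ¬IsTotalDomSet G D) :
    totalDomNum G = 0 := by
  simp [totalDomNum, h]

end DominationNumbers

section Counting

open scoped Classical

variable {V W : Type*} {G : SimpleGraph V} {H : SimpleGraph W}

def TotallyDominates (G : SimpleGraph V) (P : Finset V) (S : Set V) : Prop :=
  ∀ v ∈ S, ∃ u ∈ P, G.Adj u v

noncomputable def row (D : Finset (V × W)) (w : W) : Finset V :=
  {p ∈ D | p.2 = w}.image Prod.fst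

@[simp]
theorem mem_row {D : Finset (V × W)} {v : V} {w : W} : v ∈ row D w ↔ (v, w) ∈ D := by
  simp [row]

theorem sum_card_row_le [Fintype W] (D : Finset (V × W)) : ∑ w, #(row D w) ≤ #D :=
  calc ∑ w, #(row D w) ≤ ∑ w, #{p ∈ D | p.2 = w} := sum_le_sum fun _ _ => card_image_le
    _ = #D := (card_eq_sum_card_fiberwise fun p _ => mem_univ p.2).symm

theorem IsDomSet.isDomSet_image_snd_union_of_boxProd [Fintype W] {D : Finset (V × W)}
    (hD : IsDomSet (G □ H) D) (S : Set V) :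
    IsDomSet H ({p ∈ D | p.1 ∈ S}.image Prod.snd ∪
      ({w | TotallyDominates G (row D w) S} : Finset W)) := by
  intro w hw
  simp only [mem_union, mem_image, mem_filter, mem_univ, not_or, not_exists, not_and] at hw
  obtain ⟨hw_proj, hw_row⟩ := hw
  obtain ⟨v, hvS, hv⟩ : ∃ v ∈ S, ∀ v' ∈ row D w, ¬G.Adj v' v := by
    simpa [TotallyDominates] using hw_row
  obtain ⟨⟨v', w'⟩, hpD, hadj⟩ := hD (v, w) fun hvw => hw_proj _ ⟨hvw, hvS⟩ rfl
  rcases boxProd_adj.mp hadj with ⟨hG, rfl⟩ | ⟨hH, rfl⟩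
  · exact absurd hG (hv v' (mem_row.mpr hpD))
  · exact ⟨w', mem_union_left _ (mem_image.mpr ⟨_, mem_filter.mpr ⟨hpD, hvS⟩, rfl⟩), hH⟩

theorem IsDomSet.domNum_le_card_filter_add_of_boxProd [Fintype W] {D : Finset (V × W)}
    (hD : IsDomSet (G □ H) D) (S : Set V) :
    domNum H ≤ #{p ∈ D | p.1 ∈ S} + #{w | TotallyDominates G (row D w) S} :=
  calc domNum H ≤ #({p ∈ D | p.1 ∈ S}.image Prod.snd ∪
        ({w | TotallyDominates G (row D w) S} : Finset W)) :=
        (hD.isDomSet_image_snd_union_of_boxProd S).domNum_le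
    _ ≤ #({p ∈ D | p.1 ∈ S}.image Prod.snd) + #{w | TotallyDominates G (row D w) S} :=
        card_union_le _ _
    _ ≤ _ := Nat.add_le_add_right card_image_le _

theorem card_filter_totallyDominates_le {U P : Finset V} {b : V → V} (hbU : ∀ v, b v ∈ U)
    (hb : ∀ v, G.Adj (b v) v) (hUmin : ∀ U', IsTotalDomSet G U' → #U ≤ #U') :
    #{u ∈ U | TotallyDominates G P {v | b v = u}} ≤ #P := by
  set I := {u ∈ U | TotallyDominates G P {v | b v = u}}
  have hI : IsTotalDomSet G (P ∪ (U \ I)) := by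
    intro v
    by_cases hv : b v ∈ I
    · obtain ⟨u, huP, hu⟩ := (mem_filter.mp hv).2 v rfl
      exact ⟨u, mem_union_left _ huP, hu⟩
    · exact ⟨b v, mem_union_right _ (mem_sdiff.mpr ⟨hbU v, hv⟩), hb v⟩
  have hIU : #I ≤ #U := card_le_card (filter_subset _ _)
  have hcard : #U ≤ #P + (#U - #I) :=
    calc #U ≤ #(P ∪ (U \ I)) := hUmin _ hI
      _ ≤ #P + #(U \ I) := card_union_le _ _
      _ = #P + (#U - #I) := by rw [card_sdiff_of_subset (filter_subset _ _)]
  omega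

theorem card_mul_domNum_le_two_mul_card [Fintype W] {D : Finset (V × W)}
    (hD : IsDomSet (G □ H) D) {U : Finset V} (hU : IsTotalDomSet G U)
    (hUmin : ∀ U', IsTotalDomSet G U' → #U ≤ #U') :
    #U * domNum H ≤ 2 * #D := by
  choose b hbU hb using hU
  calc #U * domNum H = ∑ u ∈ U, domNum H := by rw [sum_const, smul_eq_mul]
    _ ≤ ∑ u ∈ U, (#{p ∈ D | b p.1 = u} + #{w | TotallyDominates G (row D w) {v | b v = u}}) :=
        sum_le_sum fun u _ => hD.domNum_le_card_filter_add_of_boxProd {v | b v = u}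
    _ = #D + ∑ w, #{u ∈ U | TotallyDominates G (row D w) {v | b v = u}} := by
        have hfibres : ∑ u ∈ U, #{p ∈ D | b p.1 = u} = #D :=
          (card_eq_sum_card_fiberwise fun p _ => hbU p.1).symm
        rw [sum_add_distrib, hfibres]
        simp only [card_filter]
        rw [sum_comm]
    _ ≤ #D + ∑ w, #(row D w) :=
        Nat.add_le_add_left
          (sum_le_sum fun w _ => card_filter_totallyDominates_le hbU hb hUmin) _
    _ ≤ 2 * #D := by linarith [sum_card_row_le D]

end Counting

theorem totalDomNum_mul_domNum_le_two_mul_domNum_boxProd_general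
    {V W : Type*} [Fintype V] [Fintype W]
    (G : SimpleGraph V) (H : SimpleGraph W) :
    totalDomNum G * domNum H ≤ 2 * domNum (G □ H) := by
  obtain ⟨D, hD, hDcard⟩ := exists_isDomSet_card_eq_domNum (G □ H)
  by_cases hG : ∃ U, IsTotalDomSet G U
  · obtain ⟨U, hU, hUcard⟩ := exists_isTotalDomSet_card_eq_totalDomNum hG
    rw [← hUcard, ← hDcard]
    exact card_mul_domNum_le_two_mul_card hD hU fun U' hU' => hUcard ▸ hU'.totalDomNum_le
  · rw [totalDomNum_eq_zero_of_forall_not_isTotalDomSet (not_exists.mp hG), zero_mul]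
    exact Nat.zero_le _

/-- `γ_t(G)·γ(H) ≤ 2·γ(G □ H)` for graphs without isolated vertices. -/
theorem totalDomNum_mul_domNum_le_two_mul_domNum_boxProd
    {V W : Type*} [Fintype V] [Fintype W]
    (G : SimpleGraph V) (H : SimpleGraph W)
    (hG : ∀ v : V, ∃ u : V, G.Adj u v) (hH : ∀ w : W, ∃ u : W, H.Adj u w) :
    totalDomNum G * domNum H ≤ 2 * domNum (G □ H) :=
  totalDomNum_mul_domNum_le_two_mul_domNum_boxProd_general G H
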